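/- arXiv:1711.00697 — 2 statements merged into one kernel-verified Lean document; each statement's English description precedes it below -/
import Mathlib

section
/- Let T be a positive semidefinite operator on ℂ^s and let φ be a uniformly distributed random unit vector in ℂ^s. Then E[⟨φ, Tφ⟩] = tr(T)/s, and for every positive integer p, E[⟨φ, Tφ⟩^p] ≤ (tr T)^p / C(s+p−1, p) ≤ (p·tr(T)/s)^p, where C(s+p−1, p) denotes the binomial coefficient. -/
open scoped Kronecker ENNReal ComplexOrder
open Matrix MeasureTheory

noncomputable section
attribute [local instance] Classical.propDecidable

/-- The singular values of a square complex matrix. -/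
def singularValues {m : Type*} [Fintype m] [DecidableEq m] (X : Matrix m m ℂ) : m → ℝ :=
  fun i => Real.sqrt ((Matrix.posSemidef_conjTranspose_mul_self X).1.eigenvalues i)

/-- The Schatten `p`-norm of a square complex matrix (`p = ⊤` giving the operator norm). -/
def schattenNorm {m : Type*} [Fintype m] [DecidableEq m] (p : ℝ≥0∞) (X : Matrix m m ℂ) : ℝ :=
  if p = ⊤ then ⨆ i, singularValues X i
  else (∑ i, singularValues X i ^ p.toReal) ^ (1 / p.toReal)

/-- `Φ` has the Kraus decomposition given by the family `K`. -/
def HasKraus {a b : Type*} [Fintype a] [Fintype b] {s : ℕ}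
    (Φ : Matrix a a ℂ → Matrix b b ℂ) (K : Fin s → Matrix b a ℂ) : Prop :=
  ∀ X, Φ X = ∑ i, K i * X * (K i)ᴴ

/-- Completely positive map: admits some Kraus decomposition. -/
def IsCP {a b : Type*} [Fintype a] [Fintype b]
    (Φ : Matrix a a ℂ → Matrix b b ℂ) : Prop :=
  ∃ (s : ℕ) (K : Fin s → Matrix b a ℂ), HasKraus Φ K

/-- Trace preserving map. -/
def IsTP {a b : Type*} [Fintype a] [Fintype b]
    (Φ : Matrix a a ℂ → Matrix b b ℂ) : Prop :=
  ∀ X, (Φ X).trace = X.trace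

/-- Completely positive and trace preserving map. -/
def IsCPTP {a b : Type*} [Fintype a] [Fintype b]
    (Φ : Matrix a a ℂ → Matrix b b ℂ) : Prop :=
  IsCP Φ ∧ IsTP Φ

/-- The Kraus rank: minimal number of Kraus operators. -/
def krausRank {a b : Type*} [Fintype a] [Fintype b]
    (Φ : Matrix a a ℂ → Matrix b b ℂ) : ℕ :=
  sInf {s : ℕ | ∃ K : Fin s → Matrix b a ℂ, HasKraus Φ K}

/-- A density operator: positive semidefinite with trace one. -/
def IsDensity {a : Type*} [Fintype a] [DecidableEq a] (ρ : Matrix a a ℂ) : Prop :=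
  ρ.PosSemidef ∧ ρ.trace = 1

/-- Loewner order. -/
def loewnerLE {a : Type*} [Fintype a] (X Y : Matrix a a ℂ) : Prop :=
  (Y - X).PosSemidef

/-- von Neumann entropy. -/
def vonNeumannEntropy {a : Type*} [Fintype a] [DecidableEq a] (ρ : Matrix a a ℂ) : ℝ :=
  if h : ρ.IsHermitian then -∑ i, h.eigenvalues i * Real.log (h.eigenvalues i) else 0

/-- Rényi entropy of order `p ∈ (1,∞]`. -/
def renyiEntropy {a : Type*} [Fintype a] [DecidableEq a] (p : ℝ≥0∞) (ρ : Matrix a a ℂ) : ℝ :=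
  if p = ⊤ then -Real.log (schattenNorm ⊤ ρ)
  else -(p.toReal / (p.toReal - 1)) * Real.log (schattenNorm p ρ)

/-- The factor `p/(p-1)`, read as `1` for `p = ∞`. -/
def pFactor (p : ℝ≥0∞) : ℝ := if p = ⊤ then 1 else p.toReal / (p.toReal - 1)

/-- Square root of a positive semidefinite matrix (junk value otherwise). -/
def psdSqrt {a : Type*} [Fintype a] [DecidableEq a] (ρ : Matrix a a ℂ) : Matrix a a ℂ :=
  if h : ρ.PosSemidef then
    (h.1.eigenvectorUnitary : Matrix a a ℂ) * diagonal ((↑) ∘ (√·) ∘ h.1.eigenvalues) *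
      (star h.1.eigenvectorUnitary : Matrix a a ℂ)
  else 0

/-- Fidelity `F(σ, ω) = ‖√σ √ω‖₁`. -/
def fidelity {a : Type*} [Fintype a] [DecidableEq a] (σ ω : Matrix a a ℂ) : ℝ :=
  schattenNorm 1 (psdSqrt σ * psdSqrt ω)

/-- Rank-one projection `|v⟩⟨v|`. -/
def projVec {a : Type*} (v : a → ℂ) : Matrix a a ℂ :=
  Matrix.of fun i j => v i * star (v j)

/-- Partial trace over the second tensor factor. -/
def ptraceSnd {b e : Type*} [Fintype e] (M : Matrix (b × e) (b × e) ℂ) : Matrix b b ℂ :=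
  Matrix.of fun i j => ∑ k, M (i, k) (j, k)

/-- Partial trace over the first tensor factor. -/
def ptraceFst {b e : Type*} [Fintype b] (M : Matrix (b × e) (b × e) ℂ) : Matrix e e ℂ :=
  Matrix.of fun k l => ∑ i, M (i, k) (i, l)

/-- The channel `ρ ↦ tr_E (V ρ V†)` associated to an isometry `V : A → B ⊗ E`. -/
def stineChan {a b e : Type*} [Fintype a] [Fintype b] [Fintype e]
    (V : Matrix (b × e) a ℂ) : Matrix a a ℂ → Matrix b b ℂ :=
  fun ρ => ptraceSnd (V * ρ * Vᴴ)

/-- The CP map `N_φ : ρ ↦ |E| tr_E ((1 ⊗ |φ⟩⟨φ|) V ρ V† (1 ⊗ |φ⟩⟨φ|))`. -/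
def stineChanPinned {a b e : Type*} [Fintype a] [Fintype b] [Fintype e] [DecidableEq b]
    (V : Matrix (b × e) a ℂ) (φ : e → ℂ) : Matrix a a ℂ → Matrix b b ℂ :=
  fun ρ => (Fintype.card e : ℂ) •
    ptraceSnd (((1 : Matrix b b ℂ) ⊗ₖ projVec φ) * (V * ρ * Vᴴ) * ((1 : Matrix b b ℂ) ⊗ₖ projVec φ))

/-- `⟨y| M |y⟩`. -/
def qForm {b : Type*} [Fintype b] (y : b → ℂ) (M : Matrix b b ℂ) : ℂ :=
  star y ⬝ᵥ M *ᵥ y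

/-- The uniform (Haar, rotation-invariant) probability measure on the unit sphere of `ℂ^s`. -/
def IsUniformOnSphere {s : ℕ} (μ : Measure (Fin s → ℂ)) : Prop :=
  IsProbabilityMeasure μ ∧
  μ {v : Fin s → ℂ | ∑ i, ‖v i‖ ^ 2 = 1}ᶜ = 0 ∧
  ∀ U ∈ Matrix.unitaryGroup (Fin s) ℂ, μ.map (fun v => U *ᵥ v) = μ

/-! Diagonalising `T` and using unitary invariance turns `⟨φ, Tφ⟩` into `∑ λ_k |φ_k|²`, and
Jensen's inequality bounds its `p`-th power by `(tr T)^(p-1) ∑ λ_k |φ_k|^(2p)`. Everything thus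
reduces to the moments `m_p = E |φ_i|^(2p)`, which unitary invariance alone determines.
Averaging `|√x φ_i + ζ^k √(1-x) φ_j|^(2q)` over the `(q+1)`-st roots of unity `ζ^k` gives, for
all `x ∈ [0,1]`, `∑_a C(q,a)² x^a (1-x)^(q-a) E |φ_i|^(2a) |φ_j|^(2(q-a)) = m_q`. The coefficient
of `1 - x` in this polynomial identity is `m_(p+1) = (p+1) E |φ_i|^(2p) |φ_j|²`, and summing over
`j` with `∑_j |φ_j|² = 1` gives `(s+p) m_(p+1) = (p+1) m_p`, that is `m_p = 1 / C(s+p-1, p)`. -/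

open Finset

theorem Nat.pow_le_choose_mul_pow (s p : ℕ) : s ^ p ≤ (s + p - 1).choose p * p ^ p := by
  have h := Nat.pow_le_choose (α := ℝ) p (s + p - 1)
  have hsub : ((s + p - 1 + 1 - p : ℕ) : ℝ) ^ p = (s : ℝ) ^ p := by
    rcases p with _ | p
    · simp
    · congr 2; omega
  rw [hsub, div_le_iff₀ (by positivity)] at h
  have hfac : (p.factorial : ℝ) ≤ (p : ℝ) ^ p := by exact_mod_cast Nat.factorial_le_pow p
  exact_mod_cast h.trans (mul_le_mul_of_nonneg_left hfac (Nat.cast_nonneg _))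

theorem inv_choose_le_div_pow (s p : ℕ) : ((s + p - 1).choose p : ℝ)⁻¹ ≤ ((p : ℝ) / s) ^ p := by
  rcases Nat.eq_zero_or_pos s with rfl | hs
  · rcases p with _ | p <;> simp
  have hC : (0 : ℝ) < (s + p - 1).choose p := by exact_mod_cast Nat.choose_pos (by omega)
  rw [div_pow, le_div_iff₀ (by positivity), inv_mul_eq_div, div_le_iff₀ hC, mul_comm]
  exact_mod_cast Nat.pow_le_choose_mul_pow s p

theorem pow_sum_mul_le {ι : Type*} (s : Finset ι) {w x : ι → ℝ} (hw : ∀ i ∈ s, 0 ≤ w i)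
    (hx : ∀ i ∈ s, 0 ≤ x i) {p : ℕ} (hp : p ≠ 0) :
    (∑ i ∈ s, w i * x i) ^ p ≤ (∑ i ∈ s, w i) ^ (p - 1) * ∑ i ∈ s, w i * x i ^ p := by
  rcases (sum_nonneg hw).eq_or_lt with hW | hW
  · have hw0 := (sum_eq_zero_iff_of_nonneg hw).1 hW.symm
    have hwx : ∀ q : ℕ, ∑ i ∈ s, w i * x i ^ q = 0 := fun q =>
      sum_eq_zero fun i hi => by rw [hw0 i hi, zero_mul]
    rw [show ∑ i ∈ s, w i * x i = 0 by simpa using hwx 1, hwx p, zero_pow hp, mul_zero]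
  have h := Real.pow_arith_mean_le_arith_mean_pow s (fun i => w i / ∑ j ∈ s, w j) x
    (fun i hi => div_nonneg (hw i hi) hW.le) (by rw [← sum_div, div_self hW.ne']) hx p
  simp only [div_mul_eq_mul_div, ← sum_div, div_pow] at h
  rw [div_le_div_iff₀ (by positivity) hW] at h
  exact le_of_mul_le_mul_right (h.trans_eq (by rw [← pow_sub_one_mul hp]; ring)) hW

theorem Matrix.IsHermitian.star_dotProduct_mulVec_eq_sum {n : Type*} [Fintype n] [DecidableEq n]
    {T : Matrix n n ℂ} (hT : T.IsHermitian) (v : n → ℂ) :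
    star v ⬝ᵥ T *ᵥ v = ∑ k, (hT.eigenvalues k : ℂ) *
      Complex.normSq ((star (hT.eigenvectorUnitary : Matrix n n ℂ) *ᵥ v) k) := by
  set U : Matrix n n ℂ := ↑hT.eigenvectorUnitary
  have hU : star v ᵥ* U = star (star U *ᵥ v) := by
    rw [star_mulVec, ← star_eq_conjTranspose, star_star]
  conv_lhs => rw [hT.spectral_theorem, Unitary.conjStarAlgAut_apply]
  rw [← mulVec_mulVec, ← mulVec_mulVec, dotProduct_mulVec, hU]
  simp only [dotProduct, mulVec_diagonal, Pi.star_apply, Function.comp_apply]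
  refine sum_congr rfl fun k _ => ?_
  rw [← Complex.mul_conj]
  simp
  ring

theorem Matrix.exists_mem_unitaryGroup_row_eq {n : Type*} [Fintype n] [DecidableEq n]
    {u : n → ℂ} (hu : star u ⬝ᵥ u = 1) (i : n) :
    ∃ U ∈ unitaryGroup n ℂ, U i = u := by
  set w : EuclideanSpace ℂ n := WithLp.toLp 2 (star u)
  have hw : Orthonormal ℂ (({i} : Set n).domRestrict fun _ => w) := by
    refine orthonormal_iff_ite.2 fun a b => ?_
    rw [if_pos (Subsingleton.elim a b), EuclideanSpace.inner_eq_star_dotProduct]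
    simpa [w] using hu
  obtain ⟨b, hb⟩ := hw.exists_orthonormalBasis_extension_of_card_eq (by simp)
  refine ⟨star ((EuclideanSpace.basisFun n ℂ).toBasis.toMatrix b),
    Unitary.star_mem ((EuclideanSpace.basisFun n ℂ).toMatrix_orthonormalBasis_mem_unitary b), ?_⟩
  ext k
  simp [Module.Basis.toMatrix_apply, hb i rfl, w]

theorem IsPrimitiveRoot.conj_mul_self {ζ : ℂ} {N : ℕ} (hζ : IsPrimitiveRoot ζ N) (hN : N ≠ 0) :
    starRingEnd ℂ ζ * ζ = 1 := by
  rw [Complex.conj_mul', hζ.norm'_eq_one hN]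
  simp

theorem IsPrimitiveRoot.sum_pow_mul_conj_pow_pow {ζ : ℂ} {N : ℕ} (hζ : IsPrimitiveRoot ζ N)
    {a b : ℕ} (ha : a < N) (hb : b < N) :
    ∑ k ∈ range N, (ζ ^ a * (starRingEnd ℂ) ζ ^ b) ^ k = if a = b then (N : ℂ) else 0 := by
  have hζζ := hζ.conj_mul_self (by omega)
  split_ifs with hab
  · subst hab
    simp [← mul_pow, mul_comm ζ, hζζ]
  · have hg : ζ ^ a * (starRingEnd ℂ) ζ ^ b ≠ 1 := fun h => hab <| hζ.pow_inj ha hb <| by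
      rw [← mul_one (ζ ^ a), ← one_pow b, ← hζζ, mul_pow, ← mul_assoc, h, one_mul]
    rw [geom_sum_eq hg, mul_pow, ← pow_mul, ← pow_mul, mul_comm a, mul_comm b, pow_mul, pow_mul,
      ← map_pow, hζ.pow_eq_one]
    simp

theorem IsPrimitiveRoot.sum_normSq_add_pow_mul_pow {ζ : ℂ} {N q : ℕ} (hζ : IsPrimitiveRoot ζ N)
    (hq : q < N) (z w : ℂ) :
    ∑ k ∈ range N, Complex.normSq (z + ζ ^ k * w) ^ q =
      N * ∑ a ∈ range (q + 1),
        (q.choose a : ℝ) ^ 2 * Complex.normSq z ^ a * Complex.normSq w ^ (q - a) := by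
  apply Complex.ofReal_injective
  push_cast
  set c : ℕ → ℕ → ℂ := fun a b => z ^ a * w ^ (q - a) * q.choose a *
    ((starRingEnd ℂ z) ^ b * (starRingEnd ℂ w) ^ (q - b) * q.choose b)
  -- after expanding both binomials, averaging over `k` keeps only the terms with `a = b`
  have hexpand : ∀ k, (Complex.normSq (z + ζ ^ k * w) : ℂ) ^ q = ∑ a ∈ range (q + 1),
      ∑ b ∈ range (q + 1), c a b * (ζ ^ (q - a) * (starRingEnd ℂ) ζ ^ (q - b)) ^ k := by
    intro k
    rw [← Complex.mul_conj, mul_pow, map_add, map_mul, map_pow, add_pow, add_pow, sum_mul_sum]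
    refine sum_congr rfl fun a _ => sum_congr rfl fun b _ => ?_
    simp only [c]
    ring
  have hdiag : ∀ a ∈ range (q + 1),
      ∑ b ∈ range (q + 1), c a b * (if q - a = q - b then (N : ℂ) else 0) =
        N * ((q.choose a : ℂ) ^ 2 * (Complex.normSq z : ℂ) ^ a *
          (Complex.normSq w : ℂ) ^ (q - a)) := by
    intro a ha
    rw [sum_eq_single_of_mem a ha fun b hb hba => by
      rw [if_neg (by simp at ha hb; omega), mul_zero], if_pos rfl, ← Complex.mul_conj,
      ← Complex.mul_conj]
    simp only [c]
    ring
  simp_rw [hexpand]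
  rw [sum_comm, mul_sum]
  refine sum_congr rfl fun a ha => ?_
  rw [sum_comm, ← hdiag a ha]
  refine sum_congr rfl fun b hb => ?_
  rw [← mul_sum, hζ.sum_pow_mul_conj_pow_pow (by omega) (by omega)]

theorem eq_mul_of_binomial_mixture_eq (M : ℕ → ℝ) (p : ℕ)
    (hM : ∀ x ∈ Set.Icc (0 : ℝ) 1, ∑ a ∈ range (p + 1 + 1),
      ((p + 1).choose a : ℝ) ^ 2 * x ^ a * (1 - x) ^ (p + 1 - a) * M a = M (p + 1)) :
    M (p + 1) = (p + 1) * M p := by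
  -- With `y = 1 - x`, the identity divided by `y` reads `g y = h y`. Both sides are polynomials
  -- in `y`, so they also agree at `y = 0`, where they are `(p+1)² M p` and `(p+1) M (p+1)`.
  set g : ℝ → ℝ := fun y => ∑ a ∈ range (p + 1),
    ((p + 1).choose a : ℝ) ^ 2 * (1 - y) ^ a * y ^ (p - a) * M a
  set h : ℝ → ℝ := fun y => M (p + 1) * ∑ k ∈ range (p + 1), (1 - y) ^ k
  have hgh : Set.EqOn g h (Set.Ioo 0 1) := by
    intro y hy
    have hy' := hM (1 - y) ⟨by linarith [hy.2], by linarith [hy.1]⟩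
    rw [sum_range_succ, Nat.choose_self, Nat.sub_self, sub_sub_cancel] at hy'
    have hyg : y * g y = ∑ a ∈ range (p + 1),
        ((p + 1).choose a : ℝ) ^ 2 * (1 - y) ^ a * y ^ (p + 1 - a) * M a := by
      simp only [g, mul_sum]
      refine sum_congr rfl fun a ha => ?_
      rw [show p + 1 - a = p - a + 1 by simp at ha; omega, pow_succ]
      ring
    have hyh : y * h y = M (p + 1) * (1 - (1 - y) ^ (p + 1)) := by
      rw [← mul_neg_geom_sum, sub_sub_cancel]
      ring
    exact mul_left_cancel₀ hy.1.ne' (by linear_combination hyg + hy' - hyh)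
  have h0 : g 0 = h 0 :=
    hgh.closure (by fun_prop) (by fun_prop) (by rw [closure_Ioo zero_ne_one]; simp)
  simp only [g, h, sub_zero, one_pow, mul_one, sum_const, card_range, nsmul_eq_mul] at h0
  rw [sum_range_succ, sum_eq_zero fun a ha => by rw [zero_pow (by simp at ha; omega)]; simp,
    Nat.sub_self, pow_zero, Nat.choose_succ_self_right] at h0
  push_cast at h0
  exact mul_left_cancel₀ (by positivity : (p : ℝ) + 1 ≠ 0) (by linear_combination -h0)

namespace IsUniformOnSphere

open Complex

variable {s : ℕ} {μ : Measure (Fin s → ℂ)}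

theorem ae_sum_normSq_eq_one (hμ : IsUniformOnSphere μ) :
    ∀ᵐ v ∂μ, ∑ i, normSq (v i) = 1 :=
  measure_mono_null (fun v hv => by simpa [normSq_eq_norm_sq] using hv) hμ.2.1

theorem ae_norm_le_one (hμ : IsUniformOnSphere μ) : ∀ᵐ v ∂μ, ‖v‖ ≤ 1 := by
  filter_upwards [hμ.ae_sum_normSq_eq_one] with v hv
  refine (pi_norm_le_iff_of_nonneg zero_le_one).2 fun i => ?_
  have hi : normSq (v i) ≤ 1 :=
    hv ▸ single_le_sum (fun j _ => normSq_nonneg (v j)) (mem_univ i)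
  rw [normSq_eq_norm_sq] at hi
  exact (sq_le_one_iff₀ (norm_nonneg _)).1 hi

theorem integrable_of_continuous (hμ : IsUniformOnSphere μ) {f : (Fin s → ℂ) → ℝ}
    (hf : Continuous f) : Integrable f μ := by
  have := hμ.1
  obtain ⟨C, hC⟩ :=
    (isCompact_closedBall (0 : Fin s → ℂ) 1).exists_bound_of_continuousOn hf.continuousOn
  refine Integrable.of_bound hf.aestronglyMeasurable C ?_
  filter_upwards [hμ.ae_norm_le_one] with v hv
  exact hC v (mem_closedBall_zero_iff.2 hv)

theorem integral_comp_mulVec (hμ : IsUniformOnSphere μ) {U : Matrix (Fin s) (Fin s) ℂ}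
    (hU : U ∈ unitaryGroup (Fin s) ℂ) {f : (Fin s → ℂ) → ℝ} (hf : Continuous f) :
    ∫ v, f (U *ᵥ v) ∂μ = ∫ v, f v ∂μ := by
  conv_rhs => rw [← hμ.2.2 U hU]
  exact (integral_map (Continuous.aemeasurable (by fun_prop)) hf.aestronglyMeasurable).symm

theorem integral_comp_dotProduct (hμ : IsUniformOnSphere μ) {u : Fin s → ℂ}
    (hu : star u ⬝ᵥ u = 1) (i : Fin s) {f : ℂ → ℝ} (hf : Continuous f) :
    ∫ v, f (u ⬝ᵥ v) ∂μ = ∫ v, f (v i) ∂μ := by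
  obtain ⟨U, hU, hUi⟩ := exists_mem_unitaryGroup_row_eq hu i
  rw [← hμ.integral_comp_mulVec hU (f := fun v => f (v i)) (by fun_prop), ← hUi]
  rfl

theorem integral_binomial_mixture (hμ : IsUniformOnSphere μ) {i j : Fin s} (hij : i ≠ j) (q : ℕ)
    {x : ℝ} (hx₀ : 0 ≤ x) (hx₁ : x ≤ 1) :
    ∑ a ∈ range (q + 1), (q.choose a : ℝ) ^ 2 * x ^ a * (1 - x) ^ (q - a) *
        ∫ v, normSq (v i) ^ a * normSq (v j) ^ (q - a) ∂μ =
      ∫ v, normSq (v i) ^ q ∂μ := by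
  set ζ := exp (2 * Real.pi * I / (q + 1 : ℕ))
  have hζ : IsPrimitiveRoot ζ (q + 1) := isPrimitiveRoot_exp _ (by omega)
  have hζζ : ∀ k : ℕ, starRingEnd ℂ ζ ^ k * ζ ^ k = 1 := fun k => by
    rw [← mul_pow, hζ.conj_mul_self (by omega), one_pow]
  have hrot : ∀ k : ℕ, ∫ v, normSq (√x * v i + ζ ^ k * (√(1 - x) * v j)) ^ q ∂μ =
      ∫ v, normSq (v i) ^ q ∂μ := by
    intro k
    set u : Fin s → ℂ := Pi.single i (√x : ℂ) + Pi.single j (ζ ^ k * √(1 - x))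
    have hu : star u ⬝ᵥ u = 1 := by
      simp only [u, star_add, Pi.star_single, add_dotProduct, single_dotProduct, Pi.add_apply,
        Pi.single_eq_same, Pi.single_eq_of_ne hij, Pi.single_eq_of_ne hij.symm, star_mul',
        star_pow, Complex.star_def, conj_ofReal, add_zero, zero_add]
      calc _ = ((√x * √x : ℝ) : ℂ) +
            (starRingEnd ℂ ζ ^ k * ζ ^ k) * ((√(1 - x) * √(1 - x) : ℝ) : ℂ) := by
            push_cast; ring
        _ = 1 := by
            rw [hζζ, Real.mul_self_sqrt hx₀, Real.mul_self_sqrt (by linarith)]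
            push_cast; ring
    have := hμ.integral_comp_dotProduct hu i (f := fun z => normSq z ^ q) (by fun_prop)
    simpa [u, add_dotProduct, single_dotProduct, hij, mul_assoc, mul_comm, mul_left_comm] using this
  have hpoint : ∀ v : Fin s → ℂ,
      ∑ k ∈ range (q + 1), normSq (√x * v i + ζ ^ k * (√(1 - x) * v j)) ^ q =
        (q + 1 : ℕ) * ∑ a ∈ range (q + 1), (q.choose a : ℝ) ^ 2 * x ^ a * (1 - x) ^ (q - a) *
          (normSq (v i) ^ a * normSq (v j) ^ (q - a)) := by
    intro v
    rw [hζ.sum_normSq_add_pow_mul_pow (lt_add_one q)]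
    simp only [normSq_mul, normSq_ofReal, Real.mul_self_sqrt hx₀,
      Real.mul_self_sqrt (sub_nonneg.2 hx₁), mul_pow]
    congr 1
    exact sum_congr rfl fun a _ => by ring
  have hsum := integral_congr_ae (μ := μ) (Filter.Eventually.of_forall hpoint)
  rw [integral_finsetSum _ fun k _ => hμ.integrable_of_continuous (by fun_prop),
    integral_const_mul, integral_finsetSum _ fun a _ => hμ.integrable_of_continuous (by fun_prop)]
    at hsum
  simp only [hrot, integral_const_mul, sum_const, card_range, nsmul_eq_mul] at hsum
  exact (mul_left_cancel₀ (by positivity) hsum).symm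

theorem integral_normSq_pow_succ (hμ : IsUniformOnSphere μ) {i j : Fin s} (hij : i ≠ j) (p : ℕ) :
    ∫ v, normSq (v i) ^ (p + 1) ∂μ = (p + 1) * ∫ v, normSq (v i) ^ p * normSq (v j) ∂μ := by
  have := eq_mul_of_binomial_mixture_eq
    (fun a => ∫ v, normSq (v i) ^ a * normSq (v j) ^ (p + 1 - a) ∂μ) p
    fun x hx => by
      simp only [Nat.sub_self, pow_zero, mul_one]
      exact hμ.integral_binomial_mixture hij (p + 1) hx.1 hx.2
  simpa using this

theorem integral_normSq_pow_succ_mul (hμ : IsUniformOnSphere μ) (i : Fin s) (p : ℕ) :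
    (s + p) * ∫ v, normSq (v i) ^ (p + 1) ∂μ = (p + 1) * ∫ v, normSq (v i) ^ p ∂μ := by
  set m := ∫ v, normSq (v i) ^ (p + 1) ∂μ
  have hj : ∀ j, (p + 1) * ∫ v, normSq (v i) ^ p * normSq (v j) ∂μ =
      m + if j = i then p * m else 0 := by
    intro j
    split_ifs with hji
    · simp only [hji, ← pow_succ, m]
      ring
    · rw [← hμ.integral_normSq_pow_succ (Ne.symm hji), add_zero]
  have hsphere : ∫ v, normSq (v i) ^ p ∂μ = ∑ j, ∫ v, normSq (v i) ^ p * normSq (v j) ∂μ := by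
    rw [← integral_finsetSum _ fun j _ => hμ.integrable_of_continuous (by fun_prop)]
    refine integral_congr_ae ?_
    filter_upwards [hμ.ae_sum_normSq_eq_one] with v hv
    rw [← mul_sum, hv, mul_one]
  rw [hsphere, mul_sum]
  simp only [hj, sum_add_distrib, sum_ite_eq', mem_univ, if_true, sum_const, card_univ,
    Fintype.card_fin, nsmul_eq_mul]
  ring

theorem integral_normSq_pow (hμ : IsUniformOnSphere μ) (i : Fin s) (p : ℕ) :
    ∫ v, normSq (v i) ^ p ∂μ = ((s + p - 1).choose p : ℝ)⁻¹ := by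
  have := hμ.1
  have hs := i.pos
  induction p with
  | zero => simp
  | succ p ih =>
    have hrec := hμ.integral_normSq_pow_succ_mul i p
    have hchoose := Nat.add_one_mul_choose_eq (s + p - 1) p
    rw [show s + p - 1 + 1 = s + p by omega] at hchoose
    rw [ih] at hrec
    rw [show s + (p + 1) - 1 = s + p by omega]
    have hC : (0 : ℝ) < (s + p - 1).choose p := by exact_mod_cast Nat.choose_pos (by omega)
    have hcast : ((s : ℝ) + p) * (s + p - 1).choose p = (s + p).choose (p + 1) * (p + 1) := by
      exact_mod_cast hchoose
    field_simp at hrec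
    refine eq_inv_of_mul_eq_one_left (mul_right_cancel₀ (by positivity : (p : ℝ) + 1 ≠ 0) ?_)
    linear_combination hrec - (∫ v, normSq (v i) ^ (p + 1) ∂μ) * hcast

theorem integral_sum_mul_normSq_pow (hμ : IsUniformOnSphere μ) (w : Fin s → ℝ) (p : ℕ) :
    ∫ v, ∑ k, w k * normSq (v k) ^ p ∂μ = (∑ k, w k) * ((s + p - 1).choose p : ℝ)⁻¹ := by
  rw [integral_finsetSum _ fun k _ => hμ.integrable_of_continuous (by fun_prop), sum_mul]
  simp only [integral_const_mul, hμ.integral_normSq_pow]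

theorem integral_sum_mul_normSq_pow_le (hμ : IsUniformOnSphere μ) {w : Fin s → ℝ}
    (hw : ∀ k, 0 ≤ w k) {p : ℕ} (hp : p ≠ 0) :
    ∫ v, (∑ k, w k * normSq (v k)) ^ p ∂μ ≤ (∑ k, w k) ^ p / ((s + p - 1).choose p : ℝ) := by
  calc ∫ v, (∑ k, w k * normSq (v k)) ^ p ∂μ
      ≤ ∫ v, (∑ k, w k) ^ (p - 1) * ∑ k, w k * normSq (v k) ^ p ∂μ :=
        integral_mono (hμ.integrable_of_continuous (by fun_prop))
          (hμ.integrable_of_continuous (by fun_prop))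
          fun v => pow_sum_mul_le univ (fun k _ => hw k) (fun k _ => normSq_nonneg _) hp
    _ = (∑ k, w k) ^ p / ((s + p - 1).choose p : ℝ) := by
        rw [integral_const_mul, hμ.integral_sum_mul_normSq_pow, ← mul_assoc,
          pow_sub_one_mul hp, div_eq_mul_inv]

theorem integral_comp_re_star_dotProduct_mulVec (hμ : IsUniformOnSphere μ)
    {T : Matrix (Fin s) (Fin s) ℂ} (hT : T.IsHermitian) {g : ℝ → ℝ} (hg : Continuous g) :
    ∫ v, g (star v ⬝ᵥ T *ᵥ v).re ∂μ = ∫ v, g (∑ k, hT.eigenvalues k * normSq (v k)) ∂μ := by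
  simp only [hT.star_dotProduct_mulVec_eq_sum, re_sum, re_ofReal_mul, ofReal_re]
  exact hμ.integral_comp_mulVec (Unitary.star_mem hT.eigenvectorUnitary.2)
    (f := fun v => g (∑ k, hT.eigenvalues k * normSq (v k))) (by fun_prop)

end IsUniformOnSphere

theorem stmt5_general (s : ℕ)
    (T : Matrix (Fin s) (Fin s) ℂ) (hT : T.PosSemidef)
    (μ : Measure (Fin s → ℂ)) (hμ : IsUniformOnSphere μ) :
    (∫ v, (star v ⬝ᵥ T *ᵥ v).re ∂μ) = (T.trace).re / s ∧
    ∀ p : ℕ, 1 ≤ p →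
      (∫ v, (star v ⬝ᵥ T *ᵥ v).re ^ p ∂μ) ≤
          (T.trace).re ^ p / ((s + p - 1).choose p : ℝ) ∧
      (T.trace).re ^ p / ((s + p - 1).choose p : ℝ) ≤ ((p : ℝ) * (T.trace).re / s) ^ p := by
  have htr : T.trace.re = ∑ k, hT.1.eigenvalues k := by simp [hT.1.trace_eq_sum_eigenvalues]
  have htr₀ : 0 ≤ T.trace.re := htr ▸ sum_nonneg fun k _ => hT.eigenvalues_nonneg k
  refine ⟨?_, fun p hp => ⟨?_, ?_⟩⟩
  · have h := hμ.integral_sum_mul_normSq_pow hT.1.eigenvalues 1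
    simp only [pow_one, Nat.add_sub_cancel, Nat.choose_one_right] at h
    simpa [h, htr, div_eq_mul_inv] using
      hμ.integral_comp_re_star_dotProduct_mulVec hT.1 continuous_id
  · rw [hμ.integral_comp_re_star_dotProduct_mulVec hT.1 (continuous_pow p), htr]
    exact hμ.integral_sum_mul_normSq_pow_le hT.eigenvalues_nonneg (by omega)
  · calc T.trace.re ^ p / ((s + p - 1).choose p : ℝ)
        ≤ T.trace.re ^ p * ((p : ℝ) / s) ^ p :=
          mul_le_mul_of_nonneg_left (inv_choose_le_div_pow s p) (pow_nonneg htr₀ p)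
      _ = ((p : ℝ) * T.trace.re / s) ^ p := by ring

/-- moments of `⟨φ, Tφ⟩` for `φ` Haar-uniform on the unit sphere of `ℂ^s`. -/
theorem stmt5 (s : ℕ) (hs : 0 < s)
    (T : Matrix (Fin s) (Fin s) ℂ) (hT : T.PosSemidef)
    (μ : Measure (Fin s → ℂ)) (hμ : IsUniformOnSphere μ) :
    (∫ v, (star v ⬝ᵥ T *ᵥ v).re ∂μ) = (T.trace).re / s ∧
    ∀ p : ℕ, 1 ≤ p →
      (∫ v, (star v ⬝ᵥ T *ᵥ v).re ^ p ∂μ) ≤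
          (T.trace).re ^ p / ((s + p - 1).choose p : ℝ) ∧
      (T.trace).re ^ p / ((s + p - 1).choose p : ℝ) ≤ ((p : ℝ) * (T.trace).re / s) ^ p :=
  stmt5_general s T hT μ hμ

end
end

section
/- Let A, B be finite-dimensional complex Hilbert spaces with |A| ≥ |B|. Let (x_i)_{i=1}^{|A|} be an orthonormal basis of A, let (e_j)_{j=1}^{|B|} be an orthonormal basis of B, and for 1 ≤ i ≤ |A| set ψ_i = (1/√|B|)·Σ_{j=1}^{|B|} e^{2πi ji/|A|} e_j. Define the classical-quantum channel N : L(A) → L(B) by N(X) = Σ_{i=1}^{|A|} ⟨x_i| X |x_i⟩ |ψ_i⟩⟨ψ_i|. Then N is a CPTP map with Kraus rank at most |A|, and for every 0 < ε < 1/2, every completely positive map N̂ : L(A) → L(B) satisfying (1−ε)N(R) − ε·(tr R)·1_B/|B| ≤ N̂(R) ≤ (1+ε)N(R) + ε·(tr R)·1_B/|B| (Loewner order) for all positive semidefinite R on A has Kraus rank at least |A|. -/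
open scoped Kronecker ENNReal ComplexOrder
open Matrix MeasureTheory

noncomputable section
attribute [local instance] Classical.propDecidable

/-- The classical-quantum channel `N(X) = ∑_i ⟨x_i|X|x_i⟩ |ψ_i⟩⟨ψ_i|`. -/
def cqChan (a b : ℕ) (x : Fin a → (Fin a → ℂ)) (ψ : Fin a → (Fin b → ℂ)) :
    Matrix (Fin a) (Fin a) ℂ → Matrix (Fin b) (Fin b) ℂ :=
  fun X => ∑ i, (star (x i) ⬝ᵥ X *ᵥ x i) • projVec (ψ i)

/-!
The operators `|ψ_i⟩⟨x_i|` are Kraus operators of `N`, and trace preservation is completeness of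
`(x_i)` together with `‖ψ_i‖ = 1`. For the lower bound fix `w = e_1`: every `ψ_i` has overlap
`|⟨w, ψ_i⟩|² = 1/|B|`, so `⟨w|N(R)|w⟩ = tr R / |B|` and the Loewner lower bound forces
`⟨w|N̂(R)|w⟩ ≥ (1 - 2ε) tr R / |B| > 0` for every nonzero `R ≥ 0`. If `N̂` had Kraus operators
`K_1, …, K_s` with `s < |A|`, the linear map `u ↦ (⟨w|K_l u⟩)_l` would vanish on some `u ≠ 0`,
and `R = |u⟩⟨u|` would give `⟨w|N̂(R)|w⟩ = ∑_l |⟨w|K_l u⟩|² = 0`.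
-/

theorem projVec_eq_vecMulVec {n : Type*} (v : n → ℂ) : projVec v = vecMulVec v (star v) := rfl

section RankOne

variable {n m : Type*} [Fintype n]

theorem projVec_posSemidef (v : n → ℂ) : (projVec v).PosSemidef :=
  posSemidef_vecMulVec_self_star v

theorem trace_projVec (v : n → ℂ) : (projVec v).trace = v ⬝ᵥ star v :=
  trace_vecMulVec v (star v)

theorem mul_projVec_mul_conjTranspose [Fintype m] (K : Matrix m n ℂ) (u : n → ℂ) :
    K * projVec u * Kᴴ = projVec (K *ᵥ u) := by
  rw [projVec_eq_vecMulVec, mul_vecMulVec, vecMulVec_mul, projVec_eq_vecMulVec, star_mulVec]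

theorem dotProduct_projVec_mulVec (v w : n → ℂ) :
    star w ⬝ᵥ projVec v *ᵥ w = Complex.normSq (star w ⬝ᵥ v) := by
  rw [projVec_eq_vecMulVec, vecMulVec_mulVec, op_smul_eq_smul, dotProduct_smul, smul_eq_mul,
    star_dotProduct, ← Complex.mul_conj, mul_comm]
  rfl

end RankOne

theorem sum_dotProduct_mulVec_eq_trace {n : Type*} [Fintype n] [DecidableEq n]
    (x : n → n → ℂ) (hx : ∀ i j, star (x i) ⬝ᵥ x j = if i = j then 1 else 0)
    (X : Matrix n n ℂ) : ∑ i, star (x i) ⬝ᵥ X *ᵥ x i = X.trace := by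
  set G : Matrix n n ℂ := of fun t i => x i t
  -- `G` is a square isometry, hence unitary: `(x i)` is complete.
  have hG : Gᴴ * G = 1 := by
    ext i j
    simpa [G, mul_apply, dotProduct, one_apply] using hx i j
  calc ∑ i, star (x i) ⬝ᵥ X *ᵥ x i = (Gᴴ * X * G).trace := by
        simp only [trace, diag, mul_mul_apply]; rfl
    _ = X.trace := by rw [trace_mul_cycle, mul_eq_one_comm.mp hG, one_mul]

theorem trace_projVec_eq_sum_normSq {n : Type*} [Fintype n] [DecidableEq n] (e : n → n → ℂ)
    (he : ∀ i j, star (e i) ⬝ᵥ e j = if i = j then 1 else 0) (v : n → ℂ) :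
    (projVec v).trace = ∑ j, (Complex.normSq (star (e j) ⬝ᵥ v) : ℂ) := by
  simp only [← sum_dotProduct_mulVec_eq_trace e he, dotProduct_projVec_mulVec]

theorem dotProduct_sum_smul_of_orthonormal {n : Type*} [Fintype n] [DecidableEq n]
    {e : n → n → ℂ} (he : ∀ i j, star (e i) ⬝ᵥ e j = if i = j then 1 else 0)
    (d : n → ℂ) (j : n) : star (e j) ⬝ᵥ ∑ k, d k • e k = d j := by
  simp [dotProduct_sum, dotProduct_smul, he]

theorem cqChan_hasKraus {a b : ℕ} (x : Fin a → Fin a → ℂ) (ψ : Fin a → Fin b → ℂ) :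
    HasKraus (cqChan a b x ψ) fun i => vecMulVec (ψ i) (star (x i)) := by
  intro X
  refine Finset.sum_congr rfl fun i _ => ?_
  rw [conjTranspose_vecMulVec, vecMulVec_mul, vecMulVec_mul_vecMulVec, vecMulVec_smul,
    ← dotProduct_mulVec, star_star, projVec_eq_vecMulVec]

theorem cqChan_isTP {a b : ℕ} {x : Fin a → Fin a → ℂ}
    (hx : ∀ i j, star (x i) ⬝ᵥ x j = if i = j then 1 else 0) {ψ : Fin a → Fin b → ℂ}
    (hψ : ∀ i, (projVec (ψ i)).trace = 1) : IsTP (cqChan a b x ψ) := by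
  intro X
  simp only [cqChan, trace_sum, trace_smul, hψ, smul_eq_mul, mul_one]
  exact sum_dotProduct_mulVec_eq_trace x hx X

theorem dotProduct_cqChan_mulVec {a b : ℕ} (x : Fin a → Fin a → ℂ) (ψ : Fin a → Fin b → ℂ)
    (w : Fin b → ℂ) (X : Matrix (Fin a) (Fin a) ℂ) :
    star w ⬝ᵥ cqChan a b x ψ X *ᵥ w =
      ∑ i, (star (x i) ⬝ᵥ X *ᵥ x i) * Complex.normSq (star w ⬝ᵥ ψ i) := by
  simp only [cqChan, sum_mulVec, dotProduct_sum, smul_mulVec, dotProduct_smul, smul_eq_mul,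
    dotProduct_projVec_mulVec]

section Kraus

variable {n m : Type*} [Fintype n] [Fintype m] {s : ℕ}

theorem HasKraus.dotProduct_mulVec_projVec {Φ : Matrix n n ℂ → Matrix m m ℂ}
    {K : Fin s → Matrix m n ℂ} (hK : HasKraus Φ K) (u : n → ℂ) (w : m → ℂ) :
    star w ⬝ᵥ Φ (projVec u) *ᵥ w = ∑ l, (Complex.normSq (star w ⬝ᵥ K l *ᵥ u) : ℂ) := by
  simp only [hK (projVec u), sum_mulVec, dotProduct_sum, mul_projVec_mul_conjTranspose,
    dotProduct_projVec_mulVec]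

theorem exists_ne_zero_forall_dotProduct_mulVec_eq_zero (K : Fin s → Matrix m n ℂ)
    (hs : s < Fintype.card n) (w : m → ℂ) : ∃ u ≠ 0, ∀ l, star w ⬝ᵥ K l *ᵥ u = 0 := by
  let Z : Matrix (Fin s) n ℂ := of fun l => star w ᵥ* K l
  have hker : LinearMap.ker Z.mulVecLin ≠ ⊥ :=
    LinearMap.ker_ne_bot_of_finrank_lt (by simpa using hs)
  obtain ⟨u, hu, hu0⟩ := (Submodule.ne_bot_iff _).mp hker
  refine ⟨u, hu0, fun l => ?_⟩
  rw [dotProduct_mulVec]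
  exact congrFun (LinearMap.mem_ker.mp hu) l

theorem HasKraus.card_le {Φ : Matrix n n ℂ → Matrix m m ℂ} {K : Fin s → Matrix m n ℂ}
    (hK : HasKraus Φ K) (w : m → ℂ) (hw : ∀ u ≠ 0, star w ⬝ᵥ Φ (projVec u) *ᵥ w ≠ 0) :
    Fintype.card n ≤ s := by
  by_contra! hs
  obtain ⟨u, hu, hKu⟩ := exists_ne_zero_forall_dotProduct_mulVec_eq_zero K hs w
  exact hw u hu (by simp [hK.dotProduct_mulVec_projVec, hKu])

theorem card_le_krausRank {Φ : Matrix n n ℂ → Matrix m m ℂ} (hΦ : IsCP Φ) (w : m → ℂ)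
    (hw : ∀ u ≠ 0, star w ⬝ᵥ Φ (projVec u) *ᵥ w ≠ 0) : Fintype.card n ≤ krausRank Φ := by
  obtain ⟨s, K, hK⟩ := hΦ
  exact le_csInf ⟨s, K, hK⟩ fun _ ⟨_, hK'⟩ => hK'.card_le w hw

end Kraus

theorem dotProduct_mulVec_pos_of_loewnerLE {m : Type*} [Fintype m] [DecidableEq m]
    {M M' : Matrix m m ℂ} {w : m → ℂ} (hw : star w ⬝ᵥ w = 1) {ε : ℝ} (hε : ε < 1 / 2)
    {t : ℂ} (ht : 0 < t) (hM : star w ⬝ᵥ M *ᵥ w = t)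
    (h : loewnerLE (((1 - ε : ℝ) : ℂ) • M - ((ε : ℂ) * t) • 1) M') :
    0 < star w ⬝ᵥ M' *ᵥ w := by
  have hle := h.dotProduct_mulVec_nonneg w
  rw [sub_mulVec, dotProduct_sub, sub_mulVec, dotProduct_sub, smul_mulVec, dotProduct_smul,
    smul_mulVec, dotProduct_smul, one_mulVec, hM, hw, smul_eq_mul, smul_eq_mul] at hle
  have hpos : 0 < ((1 - 2 * ε : ℝ) : ℂ) * t :=
    mul_pos (by exact_mod_cast (by linarith : (0 : ℝ) < 1 - 2 * ε)) ht
  refine hpos.trans_le (sub_nonneg.mp ?_)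
  convert hle using 2
  push_cast
  ring

theorem normSq_dotProduct_fourier {a b : ℕ} {e : Fin b → Fin b → ℂ}
    (he : ∀ i j, star (e i) ⬝ᵥ e j = if i = j then 1 else 0) {ψ : Fin a → Fin b → ℂ}
    (hψ : ∀ i, ψ i = fun t => ((Real.sqrt b : ℂ))⁻¹ *
      ∑ j : Fin b, Complex.exp
        (2 * Real.pi * Complex.I * (((j.1 : ℕ) + 1) * ((i.1 : ℕ) + 1)) / a) * e j t)
    (i : Fin a) (j : Fin b) : Complex.normSq (star (e j) ⬝ᵥ ψ i) = (b : ℝ)⁻¹ := by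
  have hψe : ψ i = ∑ k, ((Real.sqrt b : ℂ)⁻¹ * Complex.exp
      (2 * Real.pi * Complex.I * (((k.1 : ℕ) + 1) * ((i.1 : ℕ) + 1)) / a)) • e k := by
    ext t
    simp [hψ i, Finset.sum_apply, Finset.mul_sum, mul_assoc]
  rw [hψe, dotProduct_sum_smul_of_orthonormal he, Complex.normSq_mul, Complex.normSq_eq_norm_sq,
    Complex.normSq_eq_norm_sq, Complex.norm_exp]
  simp

theorem stmt11_general (a b : ℕ) (hb : 0 < b)
    (x : Fin a → (Fin a → ℂ))
    (hx : ∀ i j, star (x i) ⬝ᵥ x j = if i = j then 1 else 0)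
    (e : Fin b → (Fin b → ℂ))
    (he : ∀ i j, star (e i) ⬝ᵥ e j = if i = j then 1 else 0)
    (ψ : Fin a → (Fin b → ℂ))
    (hψ : ∀ i, ψ i = fun t => ((Real.sqrt b : ℂ))⁻¹ *
      ∑ j : Fin b, Complex.exp
        (2 * Real.pi * Complex.I * (((j.1 : ℕ) + 1) * ((i.1 : ℕ) + 1)) / a) * e j t) :
    IsCPTP (cqChan a b x ψ) ∧
    (∃ K : Fin a → Matrix (Fin b) (Fin a) ℂ, HasKraus (cqChan a b x ψ) K) ∧
    ∀ ε : ℝ, 0 < ε → ε < 1 / 2 →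
      ∀ Nh : Matrix (Fin a) (Fin a) ℂ → Matrix (Fin b) (Fin b) ℂ, IsCP Nh →
        (∀ R : Matrix (Fin a) (Fin a) ℂ, R.PosSemidef →
          loewnerLE (((1 - ε : ℝ) : ℂ) • cqChan a b x ψ R - ((ε : ℂ) * R.trace / b) • 1)
            (Nh R) ∧
          loewnerLE (Nh R)
            (((1 + ε : ℝ) : ℂ) • cqChan a b x ψ R + ((ε : ℂ) * R.trace / b) • 1)) →
        a ≤ krausRank Nh := by
  have hψe := normSq_dotProduct_fourier he hψ
  have hψ1 : ∀ i, (projVec (ψ i)).trace = 1 := fun i => by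
    simp [trace_projVec_eq_sum_normSq e he, hψe, hb.ne']
  refine ⟨⟨⟨a, _, cqChan_hasKraus x ψ⟩, cqChan_isTP hx hψ1⟩, ⟨_, cqChan_hasKraus x ψ⟩, ?_⟩
  intro ε _ hε Nh hNh hLE
  let j₀ : Fin b := ⟨0, hb⟩
  have hw : star (e j₀) ⬝ᵥ e j₀ = 1 := by simpa using he j₀ j₀
  simpa using card_le_krausRank hNh (e j₀) fun u hu => by
    have hR := (hLE (projVec u) (projVec_posSemidef u)).1
    rw [mul_div_assoc] at hR
    refine (dotProduct_mulVec_pos_of_loewnerLE hw hε ?_ ?_ hR).ne'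
    · exact div_pos (by simpa [trace_projVec] using hu) (by exact_mod_cast hb)
    · simp [dotProduct_cqChan_mulVec, hψe, ← Finset.sum_mul, sum_dotProduct_mulVec_eq_trace x hx,
        div_eq_mul_inv]

/-- the classical-quantum channel built on a tight frame is CPTP with
Kraus rank at most `|A|`, and any CP map approximating it in the two-sided Loewner sense
has Kraus rank at least `|A|`. -/
theorem stmt11 (a b : ℕ) (hb : 0 < b) (hab : b ≤ a)
    (x : Fin a → (Fin a → ℂ))
    (hx : ∀ i j, star (x i) ⬝ᵥ x j = if i = j then 1 else 0)
    (e : Fin b → (Fin b → ℂ))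
    (he : ∀ i j, star (e i) ⬝ᵥ e j = if i = j then 1 else 0)
    (ψ : Fin a → (Fin b → ℂ))
    (hψ : ∀ i, ψ i = fun t => ((Real.sqrt b : ℂ))⁻¹ *
      ∑ j : Fin b, Complex.exp
        (2 * Real.pi * Complex.I * (((j.1 : ℕ) + 1) * ((i.1 : ℕ) + 1)) / a) * e j t) :
    IsCPTP (cqChan a b x ψ) ∧
    (∃ K : Fin a → Matrix (Fin b) (Fin a) ℂ, HasKraus (cqChan a b x ψ) K) ∧
    ∀ ε : ℝ, 0 < ε → ε < 1 / 2 →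
      ∀ Nh : Matrix (Fin a) (Fin a) ℂ → Matrix (Fin b) (Fin b) ℂ, IsCP Nh →
        (∀ R : Matrix (Fin a) (Fin a) ℂ, R.PosSemidef →
          loewnerLE (((1 - ε : ℝ) : ℂ) • cqChan a b x ψ R - ((ε : ℂ) * R.trace / b) • 1)
            (Nh R) ∧
          loewnerLE (Nh R)
            (((1 + ε : ℝ) : ℂ) • cqChan a b x ψ R + ((ε : ℂ) * R.trace / b) • 1)) →
        a ≤ krausRank Nh :=
  stmt11_general a b hb x hx e he ψ hψ
end
end
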